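/- Let V be a variety with 0⃗ & 1⃗. If V has the Determining Property, then V has Boolean Factor Congruences. -/

import Mathlib

open FirstOrder Language

universe u v w

namespace Paper

variable {L : FirstOrder.Language.{v, w}}

/-- The direct product of two `L`-structures, with pointwise operations. -/
instance prodStructure (A : Type*) (B : Type*) [L.Structure A] [L.Structure B] :
    L.Structure (A × B) where
  funMap f x := (Structure.funMap f fun i => (x i).1, Structure.funMap f fun i => (x i).2)
  RelMap r x := Structure.RelMap r (fun i => (x i).1) ∧ Structure.RelMap r fun i => (x i).2

/-- The interpretation of a closed term in an algebra. -/
def interp (A : Type u) [L.Structure A] (t : L.Term Empty) : A := t.realize Empty.elim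

/-- A congruence of an `L`-structure: an equivalence relation compatible with all
basic operations. -/
structure Congruence (L : FirstOrder.Language.{v, w}) (A : Type u) [L.Structure A] where
  rel : A → A → Prop
  refl : ∀ a, rel a a
  symm : ∀ {a b}, rel a b → rel b a
  trans : ∀ {a b c}, rel a b → rel b c → rel a c
  compat : ∀ {n} (f : L.Functions n) (x y : Fin n → A),
    (∀ i, rel (x i) (y i)) → rel (Structure.funMap f x) (Structure.funMap f y)

variable {A : Type u} [L.Structure A]

/-- `θ ⋄ θ* = Δ` : `θ ∩ θ* = Δ` and `θ ∘ θ* = ∇`. -/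
def Complementary (θ θ' : Congruence L A) : Prop :=
  (∀ a b : A, θ.rel a b → θ'.rel a b → a = b) ∧ ∀ a b : A, ∃ c : A, θ.rel a c ∧ θ'.rel c b

/-- A factor congruence: the kernel of a projection onto a direct factor,
equivalently a congruence possessing a complementary factor congruence. -/
def IsFactorCongruence (θ : Congruence L A) : Prop := ∃ θ' : Congruence L A, Complementary θ θ'

/-- The meet of two congruences. -/
def Congruence.inf (θ φ : Congruence L A) : Congruence L A where
  rel a b := θ.rel a b ∧ φ.rel a b
  refl a := ⟨θ.refl a, φ.refl a⟩
  symm h := ⟨θ.symm h.1, φ.symm h.2⟩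
  trans h h' := ⟨θ.trans h.1 h'.1, φ.trans h.2 h'.2⟩
  compat f x y h := ⟨θ.compat f x y fun i => (h i).1, φ.compat f x y fun i => (h i).2⟩

/-- The order on congruences. -/
def Congruence.le (θ φ : Congruence L A) : Prop := ∀ a b : A, θ.rel a b → φ.rel a b

/-- The join of two congruences in the congruence lattice. -/
def Congruence.sup (θ φ : Congruence L A) : Congruence L A where
  rel a b := ∀ ψ : Congruence L A, θ.le ψ → φ.le ψ → ψ.rel a b
  refl a ψ _ _ := ψ.refl a
  symm h ψ h1 h2 := ψ.symm (h ψ h1 h2)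
  trans h h' ψ h1 h2 := ψ.trans (h ψ h1 h2) (h' ψ h1 h2)
  compat f x y h ψ h1 h2 := ψ.compat f x y fun i => h i ψ h1 h2

/-- A theory is equational when each axiom is a universally quantified equation. -/
def IsEquational (T : L.Theory) : Prop :=
  ∀ φ ∈ T, ∃ (n : ℕ) (t₁ t₂ : L.Term (Empty ⊕ Fin n)), φ = (t₁.bdEqual t₂).alls

/-- `Mod(T)` is a variety with `0⃗` & `1⃗`, witnessed by closed terms `z`, `o`. -/
def HasZeroOne (T : L.Theory) {l : ℕ} (z o : Fin l → L.Term Empty) : Prop :=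
  ∀ (A : Type u) [L.Structure A], A ⊨ T → Nonempty A →
    (∀ i, interp A (z i) = interp A (o i)) → ∀ x y : A, x = y

variable {l : ℕ} (z o : Fin l → L.Term Empty)

/-- `0⃗ θ e⃗ θ* 1⃗`. -/
def Between (θ θ' : Congruence L A) (e : Fin l → A) : Prop :=
  (∀ i, θ.rel (interp A (z i)) (e i)) ∧ ∀ i, θ'.rel (e i) (interp A (o i))

/-- `e⃗` is a central element of `A`. -/
def IsCentral (e : Fin l → A) : Prop :=
  ∃ (A₁ : Type u) (A₂ : Type u) (_ : L.Structure A₁) (_ : L.Structure A₂)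
    (g : A ≃[L] A₁ × A₂), ∀ i, g (e i) = (interp A₁ (z i), interp A₂ (o i))

/-- `e⃗` and `f⃗` are complementary central elements of `A`. -/
def AreComplementaryCentral (e f : Fin l → A) : Prop :=
  ∃ (A₁ : Type u) (A₂ : Type u) (_ : L.Structure A₁) (_ : L.Structure A₂)
    (g : A ≃[L] A₁ × A₂),
      (∀ i, g (e i) = (interp A₁ (z i), interp A₂ (o i))) ∧
      (∀ i, g (f i) = (interp A₁ (o i), interp A₂ (z i)))

variable (T : L.Theory)

/-- The Determining Property. -/
def HasDeterminingProperty : Prop :=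
  ∀ (A : Type u) [L.Structure A], A ⊨ T → Nonempty A →
    (∀ θ θ' : Congruence L A, Complementary θ θ' → ∃! e : Fin l → A, Between z o θ θ' e) ∧
    (∀ (θ θ' : Congruence L A) (e : Fin l → A), Complementary θ θ' → Between z o θ θ' e →
      IsCentral z o e) ∧
    (∀ e : Fin l → A, IsCentral z o e →
      ∃! p : Congruence L A × Congruence L A, Complementary p.1 p.2 ∧ Between z o p.1 p.2 e)

/-- The Weak Determining Property. -/
def HasWeakDeterminingProperty : Prop :=
  ∀ (A : Type u) [L.Structure A], A ⊨ T → Nonempty A →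
    (∀ θ θ' : Congruence L A, Complementary θ θ' →
      ∃! p : (Fin l → A) × (Fin l → A), Between z o θ θ' p.1 ∧ Between o z θ θ' p.2) ∧
    (∀ (θ θ' : Congruence L A) (e f : Fin l → A), Complementary θ θ' →
      Between z o θ θ' e → Between o z θ θ' f → AreComplementaryCentral z o e f) ∧
    (∀ e f : Fin l → A, AreComplementaryCentral z o e f →
      ∃! p : Congruence L A × Congruence L A,
        Complementary p.1 p.2 ∧ Between z o p.1 p.2 e ∧ Between o z p.1 p.2 f)

/-- Definable Factor Congruences. -/
def HasDFC : Prop :=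
  ∃ Φ : L.Formula (Fin 2 ⊕ Fin l),
    ∀ (A : Type u) (B : Type u) [L.Structure A] [L.Structure B],
      A ⊨ T → B ⊨ T → Nonempty A → Nonempty B →
        ∀ (a c : A) (b d : B),
          Φ.Realize (Sum.elim (![((a, b) : A × B), (c, d)])
            fun i => ((interp A (z i), interp B (o i)) : A × B)) ↔ a = c

/-- Definability with both `[0⃗,1⃗]` and `[1⃗,0⃗]` as parameters. -/
def HasDFC' : Prop :=
  ∃ Φ : L.Formula (Fin 2 ⊕ (Fin l ⊕ Fin l)),
    ∀ (A : Type u) (B : Type u) [L.Structure A] [L.Structure B],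
      A ⊨ T → B ⊨ T → Nonempty A → Nonempty B →
        ∀ (a c : A) (b d : B),
          Φ.Realize (Sum.elim (![((a, b) : A × B), (c, d)])
            (Sum.elim (fun i => ((interp A (z i), interp B (o i)) : A × B))
              fun i => ((interp A (o i), interp B (z i)) : A × B))) ↔ a = c

/-- Boolean Factor Congruences. -/
def HasBFC : Prop :=
  ∀ (A : Type u) [L.Structure A], A ⊨ T → Nonempty A →
    (∀ θ φ : Congruence L A, IsFactorCongruence θ → IsFactorCongruence φ →
      IsFactorCongruence (θ.inf φ) ∧ IsFactorCongruence (θ.sup φ)) ∧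
    (∀ θ φ ψ : Congruence L A, IsFactorCongruence θ → IsFactorCongruence φ →
      IsFactorCongruence ψ →
        (θ.inf (φ.sup ψ)).rel = ((θ.inf φ).sup (θ.inf ψ)).rel)

end Paper

/-!
A complementary pair `θ ⋄ θ'` splits `A ≅ A/θ × A/θ'`; write `dec a b` for the element with the
`θ`-coordinate of `a` and the `θ'`-coordinate of `b`. The Determining Property forces `dec` to
preserve every factor congruence `φ`: the map `(a, b) ↦ (dec a b, dec b a)` of `A × A`, which
exchanges `θ'`-coordinates, is an automorphism of the algebra fixing the diagonal, so conjugating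
the complementary pair `(φ × φ, φ' × φ')` by it gives a pair with the same central element `(e⃗, e⃗)`,
hence the same pair. Once `dec` preserves `φ`, the join `θ ⊔ φ` is `{(a, b) | dec a b φ b}`, and
from this `θ ⊓ φ ⋄ θ' ⊔ φ'`; so factor congruences are closed under `⊓` and `⊔`. Distributivity
`θ ⊓ (φ ⊔ ψ) ≤ (θ ⊓ φ) ⊔ (θ ⊓ ψ)` follows the same way, using that the right-hand side, being a
factor congruence, is preserved by `dec` as well.
-/

namespace Paper

variable {L : FirstOrder.Language.{v, w}}

section Homomorphisms

variable {A B : Type*} [L.Structure A] [L.Structure B]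

/-- Unlike `L.Hom`, this ignores relations, which the swap `Complementary.swap` need not preserve. -/
def PreservesFunMap (g : A → B) : Prop :=
  ∀ {n} (f : L.Functions n) (x : Fin n → A), g (Structure.funMap f x) = Structure.funMap f (g ∘ x)

lemma preservesFunMap_fst : PreservesFunMap (L := L) (Prod.fst : A × B → A) :=
  fun _ _ => rfl

lemma preservesFunMap_snd : PreservesFunMap (L := L) (Prod.snd : A × B → B) :=
  fun _ _ => rfl

lemma realize_comp {g : A → B} (hg : PreservesFunMap (L := L) g) {α : Type*} (t : L.Term α)
    (v : α → A) : t.realize (g ∘ v) = g (t.realize v) := by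
  induction t with
  | var => rfl
  | func f ts ih => rw [Term.realize, Term.realize, hg]; exact congrArg _ (funext ih)

lemma map_interp {g : A → B} (hg : PreservesFunMap (L := L) g) (t : L.Term Empty) :
    g (interp A t) = interp B t := by
  rw [interp, interp, ← realize_comp hg, Subsingleton.elim (g ∘ Empty.elim) Empty.elim]

lemma realize_prod {α : Type*} (t : L.Term α) (v : α → A × B) :
    t.realize v = (t.realize (Prod.fst ∘ v), t.realize (Prod.snd ∘ v)) := by
  rw [realize_comp preservesFunMap_fst, realize_comp preservesFunMap_snd]

lemma interp_prod (t : L.Term Empty) : interp (A × B) t = (interp A t, interp B t) :=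
  Prod.ext (map_interp preservesFunMap_fst t) (map_interp preservesFunMap_snd t)

lemma prod_model {T : L.Theory} (hT : IsEquational T) (hA : A ⊨ T) (hB : B ⊨ T) :
    (A × B) ⊨ T := by
  refine ⟨fun {φ} hφ => ?_⟩
  obtain ⟨n, t₁, t₂, rfl⟩ := hT φ hφ
  have hA := Theory.realize_sentence_of_mem (M := A) T hφ
  have hB := Theory.realize_sentence_of_mem (M := B) T hφ
  rw [Sentence.Realize, BoundedFormula.realize_alls] at hA hB ⊢
  intro xs
  specialize hA (Prod.fst ∘ xs)
  specialize hB (Prod.snd ∘ xs)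
  rw [BoundedFormula.realize_bdEqual] at hA hB ⊢
  rw [realize_prod t₁, realize_prod t₂, Sum.comp_elim, Sum.comp_elim,
    Subsingleton.elim (Prod.fst ∘ default) default, Subsingleton.elim (Prod.snd ∘ default) default,
    hA, hB]

end Homomorphisms

section Congruences

variable {A B : Type*} [L.Structure A] [L.Structure B]

lemma Congruence.rel_sup_of_left {θ φ : Congruence L A} {a b : A} (h : θ.rel a b) :
    (θ.sup φ).rel a b :=
  fun _ hθ _ => hθ _ _ h

lemma Congruence.rel_sup_of_right {θ φ : Congruence L A} {a b : A} (h : φ.rel a b) :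
    (θ.sup φ).rel a b :=
  fun _ _ hφ => hφ _ _ h

def Congruence.prod (ρ : Congruence L A) (σ : Congruence L B) : Congruence L (A × B) where
  rel u v := ρ.rel u.1 v.1 ∧ σ.rel u.2 v.2
  refl u := ⟨ρ.refl u.1, σ.refl u.2⟩
  symm h := ⟨ρ.symm h.1, σ.symm h.2⟩
  trans h h' := ⟨ρ.trans h.1 h'.1, σ.trans h.2 h'.2⟩
  compat f _ _ h := ⟨ρ.compat f _ _ fun i => (h i).1, σ.compat f _ _ fun i => (h i).2⟩

def Congruence.comap (g : A → B) (hg : PreservesFunMap (L := L) g) (Ψ : Congruence L B) :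
    Congruence L A where
  rel a b := Ψ.rel (g a) (g b)
  refl a := Ψ.refl (g a)
  symm h := Ψ.symm h
  trans h h' := Ψ.trans h h'
  compat f x y h := by
    show Ψ.rel (g _) (g _)
    rw [hg, hg]
    exact Ψ.compat f _ _ h

def Congruence.Preserves (ρ : Congruence L A) (d : A → A → A) : Prop :=
  ∀ ⦃a b c e : A⦄, ρ.rel a b → ρ.rel c e → ρ.rel (d a c) (d b e)

end Congruences

namespace Complementary

variable {A B : Type*} [L.Structure A] [L.Structure B] {θ θ' : Congruence L A}

lemma symm (hc : Complementary θ θ') : Complementary θ' θ := by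
  refine ⟨fun a b h h' => hc.1 a b h' h, fun a b => ?_⟩
  obtain ⟨c, hbc, hca⟩ := hc.2 b a
  exact ⟨c, θ'.symm hca, θ.symm hbc⟩

lemma prod {ρ ρ' : Congruence L A} {σ σ' : Congruence L B} (hρ : Complementary ρ ρ')
    (hσ : Complementary σ σ') : Complementary (ρ.prod σ) (ρ'.prod σ') := by
  refine ⟨fun u v h h' => Prod.ext (hρ.1 _ _ h.1 h'.1) (hσ.1 _ _ h.2 h'.2), fun u v => ?_⟩
  obtain ⟨c, hc, hc'⟩ := hρ.2 u.1 v.1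
  obtain ⟨d, hd, hd'⟩ := hσ.2 u.2 v.2
  exact ⟨(c, d), ⟨hc, hd⟩, ⟨hc', hd'⟩⟩

lemma comap {Ψ Ψ' : Congruence L B} (hc : Complementary Ψ Ψ') (g : A ≃ B)
    (hg : PreservesFunMap (L := L) g) : Complementary (Ψ.comap g hg) (Ψ'.comap g hg) := by
  refine ⟨fun a b h h' => g.injective (hc.1 _ _ h h'), fun a b => ?_⟩
  obtain ⟨c, h, h'⟩ := hc.2 (g a) (g b)
  refine ⟨g.symm c, ?_, ?_⟩ <;> simpa [Congruence.comap]

/-- The decomposition operation of `A ≅ A/θ × A/θ'`: `dec a b` is the element whose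
`θ`-coordinate is that of `a` and whose `θ'`-coordinate is that of `b`. -/
noncomputable def dec (hc : Complementary θ θ') (a b : A) : A := (hc.2 a b).choose

variable (hc : Complementary θ θ')

lemma rel_dec (a b : A) : θ.rel a (hc.dec a b) := (hc.2 a b).choose_spec.1

lemma dec_rel (a b : A) : θ'.rel (hc.dec a b) b := (hc.2 a b).choose_spec.2

lemma eq_dec {a b c : A} (h : θ.rel a c) (h' : θ'.rel c b) : c = hc.dec a b :=
  hc.1 _ _ (θ.trans (θ.symm h) (hc.rel_dec a b)) (θ'.trans h' (θ'.symm (hc.dec_rel a b)))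

lemma dec_self (a : A) : hc.dec a a = a := (hc.eq_dec (θ.refl a) (θ'.refl a)).symm

lemma dec_eq_right {a b : A} (h : θ.rel a b) : hc.dec a b = b :=
  (hc.eq_dec h (θ'.refl b)).symm

lemma dec_eq_left {a b : A} (h : θ'.rel a b) : hc.dec a b = a :=
  (hc.eq_dec (θ.refl a) h).symm

lemma dec_dec_left (a b c : A) : hc.dec (hc.dec a b) c = hc.dec a c :=
  (hc.eq_dec (θ.trans (θ.symm (hc.rel_dec a b)) (hc.rel_dec a c)) (hc.dec_rel a c)).symm

lemma dec_dec_swap (a b : A) : hc.dec (hc.dec a b) (hc.dec b a) = a :=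
  (hc.eq_dec (θ.symm (hc.rel_dec a b)) (θ'.symm (hc.dec_rel b a))).symm

lemma funMap_dec {n : ℕ} (f : L.Functions n) (a b : Fin n → A) :
    Structure.funMap f (fun i => hc.dec (a i) (b i)) =
      hc.dec (Structure.funMap f a) (Structure.funMap f b) :=
  hc.eq_dec (θ.compat f _ _ fun i => hc.rel_dec (a i) (b i))
    (θ'.compat f _ _ fun i => hc.dec_rel (a i) (b i))

/-- In `A × A ≅ (A/θ × A/θ') × (A/θ × A/θ')` this exchanges the two `A/θ'`-coordinates. -/
noncomputable def swap : Equiv.Perm (A × A) :=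
  Function.Involutive.toPerm (fun u => (hc.dec u.1 u.2, hc.dec u.2 u.1)) fun u =>
    Prod.ext (hc.dec_dec_swap u.1 u.2) (hc.dec_dec_swap u.2 u.1)

lemma swap_apply (u : A × A) : hc.swap u = (hc.dec u.1 u.2, hc.dec u.2 u.1) := rfl

lemma swap_diag (a : A) : hc.swap (a, a) = (a, a) := by
  rw [swap_apply, dec_self]

lemma preservesFunMap_swap : PreservesFunMap (L := L) hc.swap := fun f x =>
  Prod.ext (hc.funMap_dec f (fun i => (x i).1) (fun i => (x i).2)).symm
    (hc.funMap_dec f (fun i => (x i).2) (fun i => (x i).1)).symm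

def supCongruence {φ : Congruence L A} (hφ : φ.Preserves hc.dec) : Congruence L A where
  rel a b := φ.rel (hc.dec a b) b
  refl a := by simp only [dec_self]; exact φ.refl a
  symm {a b} h := by
    simpa only [dec_dec_left, dec_self] using hφ (φ.symm h) (φ.refl a)
  trans {a b c} h h' := by
    have := hφ h (φ.refl c)
    rw [dec_dec_left] at this
    exact φ.trans this h'
  compat f x y h := by
    simp only [← funMap_dec]
    exact φ.compat f _ _ h

lemma sup_rel_iff {φ : Congruence L A} (hφ : φ.Preserves hc.dec) {a b : A} :
    (θ.sup φ).rel a b ↔ φ.rel (hc.dec a b) b := by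
  refine ⟨fun h => h (hc.supCongruence hφ) (fun u v huv => ?_) (fun u v huv => ?_),
    fun h ψ hθψ hφψ => ψ.trans (hθψ _ _ (hc.rel_dec a b)) (hφψ _ _ h)⟩
  · show φ.rel (hc.dec u v) v
    rw [hc.dec_eq_right huv]
    exact φ.refl v
  · show φ.rel (hc.dec u v) v
    simpa only [dec_self] using hφ huv (φ.refl v)

lemma inf_sup {φ φ' : Congruence L A} (hφ : Complementary φ φ') (hφθ : φ.Preserves hc.dec)
    (hφ'θ : φ'.Preserves hc.symm.dec) : Complementary (θ.inf φ) (θ'.sup φ') := by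
  refine ⟨fun a b ⟨hθab, hφab⟩ hsup => ?_, fun a b => ?_⟩
  · rw [hc.symm.sup_rel_iff hφ'θ, hc.symm.dec_eq_left hθab] at hsup
    exact hφ.1 a b hφab hsup
  · refine ⟨hc.dec a (hφ.dec a b), ⟨hc.rel_dec _ _, ?_⟩, ?_⟩
    · simpa only [dec_self] using hφθ (φ.refl a) (hφ.rel_dec a b)
    · exact (θ'.sup φ').trans (Congruence.rel_sup_of_left (hc.dec_rel _ _))
        (Congruence.rel_sup_of_right (hφ.dec_rel a b))

/-- For `χ` preserved by `dec`: `ρ ≤ θ ⊔ χ` as soon as `θ' ⊓ ρ ≤ χ`, and `θ' ⊓ (θ ⊔ χ) ≤ χ`. -/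
lemma inf_sup_left_le {φ ψ χ : Congruence L A} (hφ : φ.Preserves hc.dec) (hψ : ψ.Preserves hc.dec)
    (hχ : χ.Preserves hc.dec) (hφχ : (θ'.inf φ).le χ) (hψχ : (θ'.inf ψ).le χ) :
    (θ'.inf (φ.sup ψ)).le χ := by
  have le_sup : ∀ {ρ : Congruence L A}, ρ.Preserves hc.dec → (θ'.inf ρ).le χ →
      ρ.le (θ.sup χ) := fun {ρ} hρ hρχ u v huv =>
    (hc.sup_rel_iff hχ).2 <| hρχ _ _
      ⟨hc.dec_rel u v, by simpa only [dec_self] using hρ huv (ρ.refl v)⟩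
  rintro a b ⟨hθ'ab, hsup⟩
  have := (hc.sup_rel_iff hχ).1 (hsup _ (le_sup hφ hφχ) (le_sup hψ hψχ))
  rwa [hc.dec_eq_left hθ'ab] at this

lemma inf_sup_left_rel {φ ψ : Congruence L A} (hφ : φ.Preserves hc.dec) (hψ : ψ.Preserves hc.dec)
    (hsup : ((θ'.inf φ).sup (θ'.inf ψ)).Preserves hc.dec) :
    (θ'.inf (φ.sup ψ)).rel = ((θ'.inf φ).sup (θ'.inf ψ)).rel := by
  ext a b
  refine ⟨hc.inf_sup_left_le hφ hψ hsup (fun _ _ => Congruence.rel_sup_of_left)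
    (fun _ _ => Congruence.rel_sup_of_right) a b, fun h => h _ ?_ ?_⟩
  · exact fun _ _ h => ⟨h.1, Congruence.rel_sup_of_left h.2⟩
  · exact fun _ _ h => ⟨h.1, Congruence.rel_sup_of_right h.2⟩

end Complementary

section DeterminingProperty

variable {A B : Type*} [L.Structure A] [L.Structure B] {l : ℕ} {z o : Fin l → L.Term Empty}

lemma Between.prod {ρ ρ' : Congruence L A} {σ σ' : Congruence L B} {e : Fin l → A}
    {e' : Fin l → B} (he : Between z o ρ ρ' e) (he' : Between z o σ σ' e') :
    Between z o (ρ.prod σ) (ρ'.prod σ') fun i => (e i, e' i) := by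
  refine ⟨fun i => ?_, fun i => ?_⟩ <;> rw [interp_prod]
  exacts [⟨he.1 i, he'.1 i⟩, ⟨he.2 i, he'.2 i⟩]

lemma Between.comap {g : A → B} (hg : PreservesFunMap (L := L) g) {Ψ Ψ' : Congruence L B}
    {e : Fin l → A} (he : Between z o Ψ Ψ' (g ∘ e)) :
    Between z o (Ψ.comap g hg) (Ψ'.comap g hg) e := by
  refine ⟨fun i => ?_, fun i => ?_⟩
  · show Ψ.rel (g _) (g _)
    exact map_interp hg (z i) ▸ he.1 i
  · show Ψ'.rel (g _) (g _)
    exact map_interp hg (o i) ▸ he.2 i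

lemma Complementary.preserves_dec_of_hasDeterminingProperty {T : L.Theory} (hT : IsEquational T)
    (hD : HasDeterminingProperty.{u} z o T) {A : Type u} [L.Structure A] (hA : A ⊨ T)
    (hne : Nonempty A) {θ θ' : Congruence L A} (hc : Complementary θ θ') {φ : Congruence L A}
    (hφ : IsFactorCongruence φ) : φ.Preserves hc.dec := by
  obtain ⟨φ', hφ⟩ := hφ
  obtain ⟨e, he, -⟩ := (hD A hA hne).1 φ φ' hφ
  obtain ⟨-, hcentral, hunique⟩ := hD (A × A) (prod_model hT hA hA) (hne.map fun a => (a, a))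
  have hE : Between z o (φ.prod φ) (φ'.prod φ') fun i => (e i, e i) := he.prod he
  have hE' : Between z o ((φ.prod φ).comap hc.swap hc.preservesFunMap_swap)
      ((φ'.prod φ').comap hc.swap hc.preservesFunMap_swap) fun i => (e i, e i) :=
    Between.comap _ (by simpa only [Function.comp_def, swap_diag] using hE)
  have hpair := (hunique _ (hcentral _ _ _ (hφ.prod hφ) hE)).unique (y₁ := (_, _)) (y₂ := (_, _))
    ⟨hφ.prod hφ, hE⟩ ⟨(hφ.prod hφ).comap hc.swap hc.preservesFunMap_swap, hE'⟩
  have hfix : φ.prod φ = (φ.prod φ).comap hc.swap hc.preservesFunMap_swap :=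
    congrArg Prod.fst hpair
  intro a b c d hab hcd
  have h : (φ.prod φ).rel (a, c) (b, d) := ⟨hab, hcd⟩
  rw [hfix] at h
  exact h.1

end DeterminingProperty

end Paper

theorem determiningProperty_hasBFC_general {L : FirstOrder.Language.{v, w}}
    (T : L.Theory) (hT : Paper.IsEquational T) {l : ℕ} (z o : Fin l → L.Term Empty)
    (hD : Paper.HasDeterminingProperty.{u} z o T) :
    Paper.HasBFC.{u} T := by
  intro A _ hA hne
  have preserves {θ θ' : Paper.Congruence L A} (hθ : Paper.Complementary θ θ')
      {φ : Paper.Congruence L A} (hφ : Paper.IsFactorCongruence φ) : φ.Preserves hθ.dec :=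
    hθ.preserves_dec_of_hasDeterminingProperty hT hD hA hne hφ
  have inf {θ φ : Paper.Congruence L A} : Paper.IsFactorCongruence θ →
      Paper.IsFactorCongruence φ → Paper.IsFactorCongruence (θ.inf φ) := by
    rintro ⟨θ', hθ⟩ ⟨φ', hφ⟩
    exact ⟨_, hθ.inf_sup hφ (preserves hθ ⟨_, hφ⟩) (preserves hθ.symm ⟨_, hφ.symm⟩)⟩
  have sup {θ φ : Paper.Congruence L A} : Paper.IsFactorCongruence θ →
      Paper.IsFactorCongruence φ → Paper.IsFactorCongruence (θ.sup φ) := by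
    rintro ⟨θ', hθ⟩ ⟨φ', hφ⟩
    exact ⟨_, (hθ.symm.inf_sup hφ.symm (preserves _ ⟨_, hφ.symm⟩) (preserves _ ⟨_, hφ⟩)).symm⟩
  refine ⟨fun θ φ hθ hφ => ⟨inf hθ hφ, sup hθ hφ⟩, fun θ φ ψ hθ hφ hψ => ?_⟩
  obtain ⟨θ', hθ'⟩ := hθ
  exact hθ'.symm.inf_sup_left_rel (preserves _ hφ) (preserves _ hψ)
    (preserves _ (sup (inf ⟨_, hθ'⟩ hφ) (inf ⟨_, hθ'⟩ hψ)))

/-- **Theorem (2)⇒(5) of the Main Theorem.** If a variety with `0⃗` & `1⃗` has the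
Determining Property then it has Boolean Factor Congruences. -/
theorem determiningProperty_hasBFC {L : FirstOrder.Language.{v, w}}
    (T : L.Theory) (hT : Paper.IsEquational T) {l : ℕ} (z o : Fin l → L.Term Empty)
    (h01 : Paper.HasZeroOne.{u} T z o)
    (hD : Paper.HasDeterminingProperty.{u} z o T) :
    Paper.HasBFC.{u} T :=
  determiningProperty_hasBFC_general T hT z o hD
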